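/- Fix Φ ∈ (0, π) and let θ(x, y) = arccos((cosh l(x,y) · cosh x − cosh y)/(sinh l(x,y) · sinh x)) for x, y > 0 be the hyperbolic inner angle, where l(x, y) = arcosh(cosh x cosh y + sinh x sinh y cos Φ). If 0 < x ≤ y, then θ(x, y) ≥ θ(x, x) and θ(x, y) ≥ θ(y, y); if x ≥ y > 0, then θ(x, y) ≤ θ(x, x) and θ(x, y) ≤ θ(y, y). (Comparison principle for the hyperbolic inner angle.) -/

import Mathlib

/-- The inverse of `cosh` on `[1, ∞)`. -/
noncomputable def arcosh (x : ℝ) : ℝ := Real.log (x + Real.sqrt (x ^ 2 - 1))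

/-- The hyperbolic edge length of the two-circle configuration with radii `x, y` and
exterior intersection angle `Φ`. -/
noncomputable def hypLen (Φ x y : ℝ) : ℝ :=
  arcosh (Real.cosh x * Real.cosh y + Real.sinh x * Real.sinh y * Real.cos Φ)

/-- The hyperbolic inner angle at the vertex of radius `x` in the two-circle configuration
with radii `x, y` and exterior intersection angle `Φ`. -/
noncomputable def thetaH (Φ x y : ℝ) : ℝ :=
  Real.arccos ((Real.cosh (hypLen Φ x y) * Real.cosh x - Real.cosh y) /
    (Real.sinh (hypLen Φ x y) * Real.sinh x))

/-!
Eliminating `l` with `cosh l = cosh x cosh y + sinh x sinh y cos Φ` gives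
`cot θ(x, y) = (sinh x coth y + cosh x cos Φ) / sin Φ`, so `θ = π/2 - arctan (cot θ)` and
comparing angles amounts to comparing cotangents in reverse. The cotangent decreases in `y`
because `coth` does, and increases in `x` because its numerator
`sinh x cosh y + cosh x sinh y cos Φ` is a nonnegative combination of `sinh (x + y)` and
`sinh (x - y)`.
-/

open Real Set

noncomputable def cotThetaH (Φ x y : ℝ) : ℝ :=
  (sinh x * cosh y + cosh x * sinh y * cos Φ) / (sinh y * sin Φ)

lemma arccos_div_sqrt_sq_add_sq {a b : ℝ} (hb : 0 < b) :
    arccos (a / √(a ^ 2 + b ^ 2)) = π / 2 - arctan (a / b) := by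
  have hsqrt : √(1 + (a / b) ^ 2) = √(a ^ 2 + b ^ 2) / b := by
    rw [show 1 + (a / b) ^ 2 = (a ^ 2 + b ^ 2) / b ^ 2 by field_simp; ring,
      sqrt_div' _ (sq_nonneg b), sqrt_sq hb.le]
  rw [arccos_eq_pi_div_two_sub_arcsin, arctan_eq_arcsin, hsqrt, div_div_div_cancel_right₀ hb.ne']

lemma one_le_cosh_mul_cosh_add_sinh_mul_sinh_mul {x y : ℝ} (hx : 0 ≤ x) (hy : 0 ≤ y)
    {c : ℝ} (hc : -1 ≤ c) : 1 ≤ cosh x * cosh y + sinh x * sinh y * c := by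
  have hxy : 0 ≤ sinh x * sinh y := mul_nonneg (sinh_nonneg_iff.mpr hx) (sinh_nonneg_iff.mpr hy)
  have := one_le_cosh (x - y)
  rw [cosh_sub] at this
  nlinarith

section hypLen

variable {Φ x y : ℝ}

-- `hypLen` is built from the local `arcosh`, which unfolds to `Real.arcosh`.
lemma cosh_hypLen (hx : 0 ≤ x) (hy : 0 ≤ y) :
    cosh (hypLen Φ x y) = cosh x * cosh y + sinh x * sinh y * cos Φ :=
  Real.cosh_arcosh (one_le_cosh_mul_cosh_add_sinh_mul_sinh_mul hx hy (neg_one_le_cos Φ))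

lemma sinh_hypLen (hx : 0 ≤ x) (hy : 0 ≤ y) :
    sinh (hypLen Φ x y) =
      √((sinh x * cosh y + cosh x * sinh y * cos Φ) ^ 2 + (sinh y * sin Φ) ^ 2) := by
  refine (Real.sinh_arcosh (one_le_cosh_mul_cosh_add_sinh_mul_sinh_mul hx hy
    (neg_one_le_cos Φ))).trans (congrArg _ ?_)
  linear_combination (cosh y ^ 2 - cos Φ ^ 2 * sinh y ^ 2) * cosh_sq x + cosh_sq y -
    sinh y ^ 2 * sin_sq_add_cos_sq Φ

lemma thetaH_eq_pi_div_two_sub_arctan (hΦ : 0 < sin Φ) (hx : 0 < x) (hy : 0 < y) :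
    thetaH Φ x y = π / 2 - arctan (cotThetaH Φ x y) := by
  have hnum : cosh (hypLen Φ x y) * cosh x - cosh y =
      sinh x * (sinh x * cosh y + cosh x * sinh y * cos Φ) := by
    rw [cosh_hypLen hx.le hy.le]
    linear_combination cosh y * cosh_sq x
  rw [thetaH, hnum, sinh_hypLen hx.le hy.le, mul_comm _ (sinh x),
    mul_div_mul_left _ _ (sinh_pos_iff.mpr hx).ne', cotThetaH,
    arccos_div_sqrt_sq_add_sq (mul_pos (sinh_pos_iff.mpr hy) hΦ)]

end hypLen

lemma cosh_div_sinh_antitoneOn : AntitoneOn (fun y ↦ cosh y / sinh y) (Ioi 0) := by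
  intro a ha b hb hab
  rw [div_le_div_iff₀ (sinh_pos_iff.mpr hb) (sinh_pos_iff.mpr ha)]
  have := sinh_nonneg_iff.mpr (sub_nonneg.mpr hab)
  rw [sinh_sub] at this
  linarith

lemma cotThetaH_antitoneOn_right {Φ x : ℝ} (hΦ : 0 ≤ sin Φ) (hx : 0 ≤ x) :
    AntitoneOn (cotThetaH Φ x) (Ioi 0) := by
  have hcoth : ∀ y ∈ Ioi (0 : ℝ),
      cotThetaH Φ x y = (sinh x * (cosh y / sinh y) + cosh x * cos Φ) / sin Φ := by
    intro y hy
    have := (sinh_pos_iff.mpr hy).ne'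
    rw [cotThetaH, ← div_div]
    congr 1
    field_simp
  intro a ha b hb hab
  have hsinh : 0 ≤ sinh x := sinh_nonneg_iff.mpr hx
  rw [hcoth a ha, hcoth b hb]
  gcongr (sinh x * ?_ + _) / _
  exact cosh_div_sinh_antitoneOn ha hb hab

lemma sinh_mul_cosh_add_cosh_mul_sinh_mul (x y c : ℝ) :
    sinh x * cosh y + cosh x * sinh y * c =
      ((1 + c) * sinh (x + y) + (1 - c) * sinh (x - y)) / 2 := by
  rw [sinh_add, sinh_sub]
  ring

lemma cotThetaH_monotone_left {Φ y : ℝ} (hΦ : 0 ≤ sin Φ) (hy : 0 ≤ y) :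
    Monotone (fun x ↦ cotThetaH Φ x y) := by
  intro a b hab
  have hcos := abs_le.mp (abs_cos_le_one Φ)
  have hden : 0 ≤ sinh y * sin Φ := mul_nonneg (sinh_nonneg_iff.mpr hy) hΦ
  have hplus : sinh (a + y) ≤ sinh (b + y) := sinh_le_sinh.mpr (by linarith)
  have hminus : sinh (a - y) ≤ sinh (b - y) := sinh_le_sinh.mpr (by linarith)
  simp only [cotThetaH, sinh_mul_cosh_add_cosh_mul_sinh_mul]
  gcongr <;> linarith

lemma thetaH_le_thetaH_of_cotThetaH_le {Φ a b c d : ℝ} (hΦ : 0 < sin Φ) (ha : 0 < a)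
    (hb : 0 < b) (hc : 0 < c) (hd : 0 < d) (h : cotThetaH Φ c d ≤ cotThetaH Φ a b) :
    thetaH Φ a b ≤ thetaH Φ c d := by
  rw [thetaH_eq_pi_div_two_sub_arctan hΦ ha hb, thetaH_eq_pi_div_two_sub_arctan hΦ hc hd]
  exact sub_le_sub_left (arctan_strictMono.monotone h) _

/-- Comparison principle for the hyperbolic inner angle: for `Φ ∈ (0, π)`, if `0 < x ≤ y`
then `θ(x, y) ≥ θ(x, x)` and `θ(x, y) ≥ θ(y, y)`; if `x ≥ y > 0` then `θ(x, y) ≤ θ(x, x)`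
and `θ(x, y) ≤ θ(y, y)`. -/
theorem hyperbolic_angle_comparison (Φ : ℝ) (hΦ : Φ ∈ Set.Ioo 0 Real.pi) (x y : ℝ) :
    (0 < x → x ≤ y → thetaH Φ x x ≤ thetaH Φ x y ∧ thetaH Φ y y ≤ thetaH Φ x y) ∧
    (0 < y → y ≤ x → thetaH Φ x y ≤ thetaH Φ x x ∧ thetaH Φ x y ≤ thetaH Φ y y) := by
  have hsin : 0 < sin Φ := sin_pos_of_pos_of_lt_pi hΦ.1 hΦ.2
  refine ⟨fun hx hxy ↦ ?_, fun hy hyx ↦ ?_⟩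
  · have hy := hx.trans_le hxy
    exact ⟨thetaH_le_thetaH_of_cotThetaH_le hsin hx hx hx hy
        (cotThetaH_antitoneOn_right hsin.le hx.le hx hy hxy),
      thetaH_le_thetaH_of_cotThetaH_le hsin hy hy hx hy
        (cotThetaH_monotone_left hsin.le hy.le hxy)⟩
  · have hx := hy.trans_le hyx
    exact ⟨thetaH_le_thetaH_of_cotThetaH_le hsin hx hy hx hx
        (cotThetaH_antitoneOn_right hsin.le hx.le hy hx hyx),
      thetaH_le_thetaH_of_cotThetaH_le hsin hx hy hy hy
        (cotThetaH_monotone_left hsin.le hy.le hyx)⟩
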